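/- arXiv:1110.4412 — 6 statements merged into one kernel-verified Lean document; each statement's English description precedes it below -/
import Mathlib

section
/- In any finite strategic-form coordination game, for any action profile α not in 𝒜* ∪ Ā (where 𝒜* is the set of pure Nash equilibria and Ā the payoff-dominant set), there exists a finite sequence of action profiles α⁰ = α, α¹, ..., αᵏ with k < |𝒜| such that each αʲ is obtained from αʲ⁻¹ by a single agent i switching to a better reply that does not decrease any other agent's utility, and αᵏ ∈ 𝒜* ∪ Ā. -/
open Function

/-- In any finite strategic-form coordination game, for any action
profile `α ∉ 𝒜* ∪ Ā` there is a finite sequence of single-agent better-reply moves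
(each making no other agent worse off), of length `k < |𝒜|`, starting at `α` and
terminating in `𝒜* ∪ Ā`. -/
theorem stmt_0
    {I : Type*} [Fintype I] [DecidableEq I]
    (A : I → Type*) [∀ i, Fintype (A i)]
    (u : I → (∀ i, A i) → ℝ)
    (Abar : Set (∀ i, A i))
    -- the set of pure Nash equilibria
    (NE : Set (∀ i, A i))
    (hNE : NE = {α | ∀ (i : I) (a : A i), u i (Function.update α i a) ≤ u i α})
    -- (a) Ā payoff-dominates its complement
    (ha : ∀ ᾱ ∈ Abar, ∀ α ∉ Abar, ∀ i : I, u i α ≤ u i ᾱ)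
    -- (b) from any α ∉ 𝒜* ∪ Ā some agent has a better reply that makes
    --     no other agent worse off
    (hb : ∀ α, α ∉ NE ∪ Abar → ∃ (i : I) (a' : A i),
      u i α < u i (Function.update α i a') ∧
      ∀ j : I, j ≠ i → u j α ≤ u j (Function.update α i a')) :
    ∀ α, α ∉ NE ∪ Abar →
      ∃ (k : ℕ) (seq : ℕ → ∀ i, A i),
        k < Fintype.card (∀ i, A i) ∧
        seq 0 = α ∧
        (∀ j < k, ∃ (i : I) (a' : A i),
          seq (j + 1) = Function.update (seq j) i a' ∧
          u i (seq j) < u i (seq (j + 1)) ∧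
          ∀ l : I, l ≠ i → u l (seq j) ≤ u l (seq (j + 1))) ∧
        seq k ∈ NE ∪ Abar := by
  classical
  set W : (∀ i, A i) → ℝ := fun β => ∑ i, u i β with hWdef
  set m : (∀ i, A i) → ℕ :=
    fun β => (Finset.univ.filter (fun γ : ∀ i, A i => W β < W γ)).card with hmdef
  -- one improving step strictly increases W
  have step : ∀ β, β ∉ NE ∪ Abar → ∃ (i : I) (a' : A i),
      u i β < u i (Function.update β i a') ∧
      (∀ l : I, l ≠ i → u l β ≤ u l (Function.update β i a')) ∧
      W β < W (Function.update β i a') := by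
    intro β hβ
    obtain ⟨i, a', h1, h2⟩ := hb β hβ
    refine ⟨i, a', h1, h2, ?_⟩
    apply Finset.sum_lt_sum
    · intro j _
      by_cases hji : j = i
      · subst hji; exact le_of_lt h1
      · exact h2 j hji
    · exact ⟨i, Finset.mem_univ i, h1⟩
  have mdec : ∀ β γ, W β < W γ → m γ < m β := by
    intro β γ h
    apply Finset.card_lt_card
    constructor
    · intro x hx
      simp only [Finset.mem_filter, Finset.mem_univ, true_and] at hx ⊢
      exact lt_trans h hx
    · intro hsub
      have := hsub (by simp [h] : γ ∈ Finset.univ.filter (fun x => W β < W x))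
      simp at this
  have key : ∀ n : ℕ, ∀ β, m β ≤ n →
      ∃ (k : ℕ) (seq : ℕ → ∀ i, A i),
        k ≤ n ∧ seq 0 = β ∧
        (∀ j < k, ∃ (i : I) (a' : A i),
          seq (j + 1) = Function.update (seq j) i a' ∧
          u i (seq j) < u i (seq (j + 1)) ∧
          ∀ l : I, l ≠ i → u l (seq j) ≤ u l (seq (j + 1))) ∧
        seq k ∈ NE ∪ Abar := by
    intro n
    induction n with
    | zero =>
      intro β hm
      by_cases hβ : β ∈ NE ∪ Abar
      · exact ⟨0, fun _ => β, le_refl 0, rfl, by intro j hj; omega, hβ⟩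
      · obtain ⟨i, a', _, _, hW⟩ := step β hβ
        exfalso
        have := mdec β (Function.update β i a') hW
        omega
    | succ n ih =>
      intro β hm
      by_cases hβ : β ∈ NE ∪ Abar
      · exact ⟨0, fun _ => β, Nat.zero_le _, rfl, by intro j hj; omega, hβ⟩
      · obtain ⟨i, a', h1, h2, hW⟩ := step β hβ
        set β' := Function.update β i a' with hβ'
        have hm' : m β' ≤ n := by
          have := mdec β β' hW; omega
        obtain ⟨k', seq', hk', h0', hstep', hend'⟩ := ih β' hm'
        refine ⟨k' + 1, fun j => if j = 0 then β else seq' (j - 1), by omega, by simp, ?_, ?_⟩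
        · intro j hj
          rcases Nat.eq_zero_or_pos j with hj0 | hj0
          · subst hj0
            refine ⟨i, a', ?_, ?_, ?_⟩
            · simp [h0', hβ']
            · simpa [h0'] using h1
            · intro l hl; simpa [h0'] using h2 l hl
          · obtain ⟨j', rfl⟩ : ∃ j', j = j' + 1 := ⟨j - 1, by omega⟩
            obtain ⟨i0, a0, e1, e2, e3⟩ := hstep' j' (by omega)
            refine ⟨i0, a0, ?_, ?_, ?_⟩
            · simpa using e1
            · simpa using e2
            · intro l hl; simpa using e3 l hl
        · simpa using hend'
  intro α hα
  have hcard : m α < Fintype.card (∀ i, A i) := by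
    have hsub : Finset.univ.filter (fun γ : ∀ i, A i => W α < W γ) ⊆
        Finset.univ.erase α := by
      intro x hx
      simp only [Finset.mem_filter, Finset.mem_univ, true_and] at hx
      apply Finset.mem_erase.mpr
      refine ⟨?_, Finset.mem_univ x⟩
      rintro rfl; exact lt_irrefl _ hx
    calc m α ≤ (Finset.univ.erase α).card := Finset.card_le_card hsub
      _ < Finset.univ.card := Finset.card_erase_lt_of_mem (Finset.mem_univ α)
      _ = Fintype.card (∀ i, A i) := rfl
  obtain ⟨k, seq, hk, h0, hstep, hend⟩ := key (m α) α le_rfl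
  exact ⟨k, seq, lt_of_le_of_lt hk hcard, h0, hstep, hend⟩
end

section
/- Every common-pool game satisfies: for every action profile α outside the set Ā of successful profiles, and for any agent i maximizing αₛ over s ∈ I: if αᵢ = pⱼ with j > 0, then switching agent i to pₖ for any k < j strictly increases uᵢ and weakly increases every other agent's utility; if j = 0, then switching agent i to pₖ for any k > 0 strictly increases uᵢ and strictly increases every other agent's utility. -/
open scoped Classical

/-- Agent `i` "succeeds" at profile `α` if its action level is strictly greater
than every other agent's. -/
def Succeeds {I : Type*} {M : ℕ} (p : Fin M → ℝ) (α : I → Fin M) (i : I) : Prop :=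
  ∀ l : I, l ≠ i → p (α l) < p (α i)

/-- Payoff in a common-pool game: `1 - c j` if agent `i` succeeds playing `p j`,
`-c j + τ j` if some other agent succeeds, and `-c j` if nobody succeeds. -/
noncomputable def cpPayoff {I : Type*} {M : ℕ} (p c τ : Fin M → ℝ)
    (α : I → Fin M) (i : I) : ℝ :=
  if Succeeds p α i then 1 - c (α i)
  else if ∃ s : I, s ≠ i ∧ Succeeds p α s then -c (α i) + τ (α i)
  else -c (α i)

/-- In a common-pool game (actions `p 0 < ⋯ < p (m+1)`, i.e. at least
two actions), for every profile `α` outside the successful set `Ā` and any agent `i`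
whose action is maximal: if `α i = j > 0` then switching `i` to any `k < j` strictly
increases `uᵢ` and weakly increases every other agent's utility; if `j = 0` then
switching to any `k > 0` strictly increases `uᵢ` and strictly increases every other
agent's utility. -/
theorem stmt_2
    {I : Type*} [Fintype I] [DecidableEq I] {m : ℕ}
    (p c τ : Fin (m + 2) → ℝ)
    (hp0 : 0 ≤ p 0) (hp : StrictMono p)
    (hc0 : 0 ≤ c 0) (hc : StrictMono c) (hc1 : c (Fin.last (m + 1)) < 1)
    (hτ : ∀ j, 0 < τ j)
    (hchain : StrictAnti (fun j => -c j + τ j))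
    (hchain0 : -c 0 < -c (Fin.last (m + 1)) + τ (Fin.last (m + 1)))
    (hchain1 : -c 0 + τ 0 < 1 - c (Fin.last (m + 1))) :
    ∀ α : I → Fin (m + 2), (¬ ∃ i, Succeeds p α i) →
      ∀ i : I, (∀ s : I, p (α s) ≤ p (α i)) →
        ((∀ k : Fin (m + 2), k < α i →
            cpPayoff p c τ α i < cpPayoff p c τ (Function.update α i k) i ∧
            ∀ l : I, l ≠ i →
              cpPayoff p c τ α l ≤ cpPayoff p c τ (Function.update α i k) l) ∧
         (α i = 0 → ∀ k : Fin (m + 2), 0 < k →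
            cpPayoff p c τ α i < cpPayoff p c τ (Function.update α i k) i ∧
            ∀ l : I, l ≠ i →
              cpPayoff p c τ α l < cpPayoff p c τ (Function.update α i k) l)) := by
  intro α hns i hmax
  have hpay : ∀ l, cpPayoff p c τ α l = -c (α l) := by
    intro l
    unfold cpPayoff
    rw [if_neg (fun h => hns ⟨l, h⟩), if_neg (fun ⟨s, _, hs⟩ => hns ⟨s, hs⟩)]
  constructor
  · intro k hk
    set β := Function.update α i k with hβ
    have hβi : β i = k := Function.update_self i k α
    have hβl : ∀ l, l ≠ i → β l = α l := fun l hl => Function.update_of_ne hl k α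
    have hnsi : ¬ Succeeds p β i := by
      intro h
      have hni : ¬ Succeeds p α i := fun h' => hns ⟨i, h'⟩
      rw [Succeeds] at hni
      push_neg at hni
      obtain ⟨l, hl, hle⟩ := hni
      have h2 := h l hl
      rw [hβl l hl, hβi] at h2
      have hpk : p k < p (α i) := hp hk
      linarith
    have h1 : cpPayoff p c τ β i = -c k + τ k ∨ cpPayoff p c τ β i = -c k := by
      unfold cpPayoff
      rw [if_neg hnsi, hβi]
      by_cases h : ∃ s, s ≠ i ∧ Succeeds p β s
      · rw [if_pos h]; left; rfl
      · rw [if_neg h]; right; rfl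
    constructor
    · rw [hpay i]
      have hck : c k < c (α i) := hc hk
      have hτk := hτ k
      rcases h1 with h | h <;> rw [h] <;> linarith
    · intro l hl
      rw [hpay l]
      unfold cpPayoff
      by_cases hs : Succeeds p β l
      · rw [if_pos hs, hβl l hl]
        linarith
      · rw [if_neg hs]
        by_cases h2 : ∃ s, s ≠ l ∧ Succeeds p β s
        · rw [if_pos h2, hβl l hl]; have := hτ (α l); linarith
        · rw [if_neg h2, hβl l hl]
  · intro h0 k hk
    have hall : ∀ s, α s = 0 := by
      intro s
      have h1 := hmax s
      rw [h0] at h1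
      by_contra hne
      have h2 : (0 : Fin (m + 2)) < α s := Fin.pos_of_ne_zero hne
      have := hp h2
      linarith
    set β := Function.update α i k with hβ
    have hβi : β i = k := Function.update_self i k α
    have hβl : ∀ l, l ≠ i → β l = α l := fun l hl => Function.update_of_ne hl k α
    have hsucc : Succeeds p β i := by
      intro l hl
      rw [hβl l hl, hall l, hβi]
      exact hp hk
    constructor
    · rw [hpay i, h0]
      unfold cpPayoff
      rw [if_pos hsucc, hβi]
      have h1 : c k ≤ c (Fin.last (m + 1)) := hc.monotone (Fin.le_last _)
      linarith
    · intro l hl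
      rw [hpay l, hall l]
      unfold cpPayoff
      have hnl : ¬ Succeeds p β l := by
        intro h
        have h2 := h i (Ne.symm hl)
        rw [hβi, hβl l hl, hall l] at h2
        exact absurd h2 (not_lt.2 (le_of_lt (hp hk)))
      rw [if_neg hnl, if_pos ⟨i, Ne.symm hl, hsucc⟩, hβl l hl, hall l]
      have := hτ (0 : Fin (m + 2))
      linarith
end

section
/- Let P_λ = (1−φ(λ)) P + φ(λ) Q_λ be a Markov transition kernel on a measurable space, where P and Q_λ are transition kernels and φ(λ) ∈ (0,1). Define the lifted kernel P_λ^L = φ(λ) Σ_{t≥0} (1−φ(λ))ᵗ Q_λ Pᵗ = Q_λ R_λ where R_λ = φ(λ) Σ_{t≥0} (1−φ(λ))ᵗ Pᵗ. Then every invariant probability measure μ_λ of P_λ (i.e., μ_λ P_λ = μ_λ) is also an invariant probability measure of P_λ^L. -/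
/-!
Let `R = φ Σₜ (1 - φ)ᵗ Pᵗ`, so that `P_λ^L = Q R`. Splitting off the term `t = 0` gives the
resolvent equation `R = φ I + (1 - φ) P R`. Applying `R` to the invariance equation
`μ = (1 - φ) μP + φ μQ` gives `μR = (1 - φ) μPR + φ μQR`, while the resolvent equation gives
`μR = φ μ + (1 - φ) μPR`. As `P` is Markov and `1 - φ < 1`, the measure `μPR` is finite and
cancels, leaving `μ = μQR = μ P_λ^L`.
-/

open MeasureTheory
open scoped ENNReal

/-- `t`-step transition kernel of the Markov kernel `P`. -/
noncomputable def kpow {X : Type*} [MeasurableSpace X]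
    (P : X → Measure X) : ℕ → X → Measure X
  | 0 => fun x => Measure.dirac x
  | (n + 1) => fun x => (kpow P n x).bind P

namespace MeasureTheory.Measure

variable {α β : Type*} [MeasurableSpace α] [MeasurableSpace β]

lemma smul_sum {ι : Type*} (a : ℝ≥0∞) (μ : ι → Measure α) :
    a • Measure.sum μ = Measure.sum fun i => a • μ i := by
  ext s hs
  simp only [smul_apply, sum_apply _ hs, smul_eq_mul, ENNReal.tsum_mul_left]

lemma bind_add_left {m₁ m₂ : Measure α} {f : α → Measure β} (hf : Measurable f) :
    (m₁ + m₂).bind f = m₁.bind f + m₂.bind f := by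
  ext s hs
  simp only [add_apply, bind_apply hs hf.aemeasurable, lintegral_add_measure]

lemma bind_add_right {m : Measure α} {f g : α → Measure β} (hf : Measurable f)
    (hg : Measurable g) : m.bind (fun x => f x + g x) = m.bind f + m.bind g := by
  have hfg : Measurable fun x => f x + g x :=
    (⟨f, hf⟩ + ⟨g, hg⟩ : ProbabilityTheory.Kernel α β).measurable
  ext s hs
  simp only [add_apply, bind_apply hs hfg.aemeasurable, bind_apply hs hf.aemeasurable,
    bind_apply hs hg.aemeasurable]
  exact lintegral_add_left ((measurable_coe hs).comp hf) _

lemma _root_.Measurable.const_smul_measure {f : α → Measure β} (hf : Measurable f) (c : ℝ≥0∞) :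
    Measurable fun x => c • f x :=
  measurable_of_measurable_coe _ fun _ hs => ((measurable_coe hs).comp hf).const_mul c

lemma bind_smul_right {m : Measure α} {f : α → Measure β} (hf : Measurable f) (c : ℝ≥0∞) :
    m.bind (fun x => c • f x) = c • m.bind f := by
  ext s hs
  simp only [smul_apply, smul_eq_mul, bind_apply hs (hf.const_smul_measure c).aemeasurable,
    bind_apply hs hf.aemeasurable]
  exact lintegral_const_mul c ((measurable_coe hs).comp hf)

lemma bind_sum_right {ι : Type*} [Countable ι] {m : Measure α} {f : ι → α → Measure β}
    (hf : ∀ i, Measurable (f i)) :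
    m.bind (fun x => Measure.sum fun i => f i x) = Measure.sum fun i => m.bind (f i) := by
  have hsum : Measurable fun x => Measure.sum fun i => f i x :=
    (ProbabilityTheory.Kernel.sum fun i => ⟨f i, hf i⟩ : ProbabilityTheory.Kernel α β).measurable
  ext s hs
  simp only [sum_apply _ hs, bind_apply hs hsum.aemeasurable, bind_apply hs (hf _).aemeasurable]
  exact lintegral_tsum fun i => ((measurable_coe hs).comp (hf i)).aemeasurable

lemma bind_apply_univ {m : Measure α} {f : α → Measure β} (hf : Measurable f)
    [∀ x, IsProbabilityMeasure (f x)] : m.bind f Set.univ = m Set.univ := by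
  simp [bind_apply MeasurableSet.univ hf.aemeasurable]

end MeasureTheory.Measure

section kpow

variable {X : Type*} [MeasurableSpace X] {P : X → Measure X}

lemma measurable_kpow (hPm : Measurable P) (n : ℕ) : Measurable (kpow P n) := by
  induction n with
  | zero => exact Measure.measurable_dirac
  | succ n ih => exact (Measure.measurable_bind' hPm).comp ih

lemma bind_kpow_succ (hPm : Measurable P) (ρ : Measure X) (n : ℕ) :
    ρ.bind (kpow P (n + 1)) = (ρ.bind (kpow P n)).bind P :=
  (Measure.bind_bind (measurable_kpow hPm n).aemeasurable hPm.aemeasurable).symm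

lemma bind_bind_kpow (hPm : Measurable P) (ρ : Measure X) (n : ℕ) :
    (ρ.bind P).bind (kpow P n) = ρ.bind (kpow P (n + 1)) := by
  induction n with
  | zero => rw [bind_kpow_succ hPm, kpow, Measure.bind_dirac, Measure.bind_dirac]
  | succ n ih => rw [bind_kpow_succ hPm, ih, bind_kpow_succ hPm _ (n + 1)]

lemma bind_kpow_apply_univ (hP : ∀ x, IsProbabilityMeasure (P x)) (hPm : Measurable P)
    (ρ : Measure X) (n : ℕ) : ρ.bind (kpow P n) Set.univ = ρ Set.univ := by
  induction n with
  | zero => rw [kpow, Measure.bind_dirac]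
  | succ n ih => rw [bind_kpow_succ hPm, Measure.bind_apply_univ hPm, ih]

end kpow

section Resolvent

variable {X : Type*} [MeasurableSpace X] {P Q : X → Measure X} {c d : ℝ≥0∞}

/-- With `c = 1 - φ`, the paper's `ρ R_λ` is `φ • resolventMeasure P c ρ`. -/
noncomputable def resolventMeasure (P : X → Measure X) (c : ℝ≥0∞) (ρ : Measure X) : Measure X :=
  Measure.sum fun t : ℕ => c ^ t • ρ.bind (kpow P t)

/-- The paper's `P_λ^L = Q R_λ` when `c = 1 - φ` and `d = φ`. -/
noncomputable def liftedKernel (P Q : X → Measure X) (c d : ℝ≥0∞) (x : X) : Measure X :=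
  Measure.sum fun t : ℕ => (d * c ^ t) • (Q x).bind (kpow P t)

lemma resolventMeasure_add (hPm : Measurable P) (ρ₁ ρ₂ : Measure X) :
    resolventMeasure P c (ρ₁ + ρ₂) = resolventMeasure P c ρ₁ + resolventMeasure P c ρ₂ := by
  simp only [resolventMeasure, Measure.bind_add_left (measurable_kpow hPm _), smul_add,
    Measure.sum_add_sum]

lemma resolventMeasure_smul (a : ℝ≥0∞) (ρ : Measure X) :
    resolventMeasure P c (a • ρ) = a • resolventMeasure P c ρ := by
  simp only [resolventMeasure, Measure.bind_smul, Measure.smul_sum, smul_comm a]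

lemma resolventMeasure_eq_add_smul_resolventMeasure_bind (hPm : Measurable P) (ρ : Measure X) :
    resolventMeasure P c ρ = ρ + c • resolventMeasure P c (ρ.bind P) := by
  ext A hA
  simp only [resolventMeasure, Measure.add_apply, Measure.smul_apply, Measure.sum_apply _ hA,
    smul_eq_mul, ← ENNReal.tsum_mul_left, ← mul_assoc, ← pow_succ', bind_bind_kpow hPm]
  rw [tsum_eq_zero_add' ENNReal.summable, pow_zero, one_mul, kpow, Measure.bind_dirac]

lemma isFiniteMeasure_resolventMeasure (hP : ∀ x, IsProbabilityMeasure (P x))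
    (hPm : Measurable P) (hc : c < 1) (ρ : Measure X) [IsFiniteMeasure ρ] :
    IsFiniteMeasure (resolventMeasure P c ρ) := by
  constructor
  simp only [resolventMeasure, Measure.sum_apply _ MeasurableSet.univ, Measure.smul_apply,
    bind_kpow_apply_univ hP hPm, smul_eq_mul, ENNReal.tsum_mul_right, ENNReal.tsum_geometric]
  exact ENNReal.mul_lt_top (ENNReal.inv_lt_top.2 (tsub_pos_of_lt hc)) (measure_lt_top ρ _)

lemma bind_liftedKernel (hPm : Measurable P) (hQm : Measurable Q) (μ : Measure X) :
    μ.bind (liftedKernel P Q c d) = d • resolventMeasure P c (μ.bind Q) := by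
  have hQP : ∀ t, Measurable fun x => (Q x).bind (kpow P t) :=
    fun t => (Measure.measurable_bind' (measurable_kpow hPm t)).comp hQm
  unfold liftedKernel
  rw [Measure.bind_sum_right fun t => (hQP t).const_smul_measure _, resolventMeasure,
    Measure.smul_sum]
  congr 1 with t
  rw [Measure.bind_smul_right (hQP t), mul_smul,
    Measure.bind_bind hQm.aemeasurable (measurable_kpow hPm t).aemeasurable]

end Resolvent

theorem bind_liftedKernel_eq_of_bind_eq {X : Type*} [MeasurableSpace X] {P Q : X → Measure X}
    {c d : ℝ≥0∞} (hP : ∀ x, IsProbabilityMeasure (P x)) (hPm : Measurable P)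
    (hQm : Measurable Q) (hc : c < 1) {μ : Measure X} [IsFiniteMeasure μ]
    (hμ : μ.bind (fun x => c • P x + d • Q x) = μ) :
    μ.bind (liftedKernel P Q c d) = μ := by
  have hsplit : c • μ.bind P + d • μ.bind Q = μ := by
    rwa [Measure.bind_add_right (hPm.const_smul_measure c) (hQm.const_smul_measure d),
      Measure.bind_smul_right hPm, Measure.bind_smul_right hQm] at hμ
  have hR : resolventMeasure P c μ =
      c • resolventMeasure P c (μ.bind P) + μ.bind (liftedKernel P Q c d) := by
    conv_lhs => rw [← hsplit]
    rw [resolventMeasure_add hPm, resolventMeasure_smul, resolventMeasure_smul,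
      bind_liftedKernel hPm hQm]
  rw [resolventMeasure_eq_add_smul_resolventMeasure_bind hPm, add_comm] at hR
  have : IsFiniteMeasure (μ.bind P) := ⟨by simp [Measure.bind_apply_univ hPm]⟩
  have : IsFiniteMeasure (resolventMeasure P c (μ.bind P)) :=
    isFiniteMeasure_resolventMeasure hP hPm hc _
  have : IsFiniteMeasure (c • resolventMeasure P c (μ.bind P)) :=
    Measure.smul_finite _ (hc.trans ENNReal.one_lt_top).ne
  exact ((Measure.add_right_inj _ _ _).1 hR).symm

theorem stmt_8_general
    {X : Type*} [MeasurableSpace X]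
    (P Q : X → Measure X)
    (hP : ∀ x, IsProbabilityMeasure (P x)) (hPm : Measurable P)
    (hQm : Measurable Q)
    (φ : ℝ) (hφ : φ ∈ Set.Ioo (0 : ℝ) 1)
    (Pl PlL : X → Measure X)
    -- P_λ = (1 − φ) P + φ Q_λ
    (hPl : ∀ x, Pl x = ENNReal.ofReal (1 - φ) • P x + ENNReal.ofReal φ • Q x)
    -- P_λ^L = φ Σ_t (1 − φ)ᵗ Q_λ Pᵗ  (= Q_λ R_λ)
    (hPlL : ∀ x, PlL x =
      Measure.sum fun t : ℕ =>
        ENNReal.ofReal (φ * (1 - φ) ^ t) • (Q x).bind (kpow P t)) :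
    ∀ μ : Measure X, IsProbabilityMeasure μ → μ.bind Pl = μ → μ.bind PlL = μ := by
  obtain ⟨hφ0, hφ1⟩ := hφ
  have hc : ENNReal.ofReal (1 - φ) < 1 := ENNReal.ofReal_lt_one.2 (by linarith)
  have hPlL' : PlL = liftedKernel P Q (ENNReal.ofReal (1 - φ)) (ENNReal.ofReal φ) := by
    ext1 x
    simp only [hPlL, liftedKernel, ENNReal.ofReal_mul hφ0.le,
      ENNReal.ofReal_pow (sub_nonneg.2 hφ1.le)]
  intro μ _ hμ
  rw [funext hPl] at hμ
  rw [hPlL']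
  exact bind_liftedKernel_eq_of_bind_eq hP hPm hQm hc hμ

/-- Let `P_λ = (1 − φ) P + φ Q_λ` with `φ ∈ (0,1)`, and let
`P_λ^L = φ Σ_t (1 − φ)ᵗ Q_λ Pᵗ` be the lifted kernel. Then every invariant
probability measure of `P_λ` is also an invariant probability measure of `P_λ^L`. -/
theorem stmt_8
    {X : Type*} [MeasurableSpace X]
    (P Q : X → Measure X)
    (hP : ∀ x, IsProbabilityMeasure (P x)) (hPm : Measurable P)
    (hQ : ∀ x, IsProbabilityMeasure (Q x)) (hQm : Measurable Q)
    (φ : ℝ) (hφ : φ ∈ Set.Ioo (0 : ℝ) 1)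
    (Pl PlL : X → Measure X)
    -- P_λ = (1 − φ) P + φ Q_λ
    (hPl : ∀ x, Pl x = ENNReal.ofReal (1 - φ) • P x + ENNReal.ofReal φ • Q x)
    -- P_λ^L = φ Σ_t (1 − φ)ᵗ Q_λ Pᵗ  (= Q_λ R_λ)
    (hPlL : ∀ x, PlL x =
      Measure.sum fun t : ℕ =>
        ENNReal.ofReal (φ * (1 - φ) ^ t) • (Q x).bind (kpow P t)) :
    ∀ μ : Measure X, IsProbabilityMeasure μ → μ.bind Pl = μ → μ.bind PlL = μ :=
  stmt_8_general P Q hP hPm hQm φ hφ Pl PlL hPl hPlL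
end

section
/- Let 𝒳 be a compact metric space, Q and Π Feller transition kernels on 𝒳, (Q_λ) a family of kernels with ‖Q_λ g − Q g‖_∞ → 0 as λ → 0 for each g ∈ C(𝒳), and (R_λ) kernels with ‖R_λ f − Π f‖_∞ → 0 as λ → 0 for all f ∈ C(𝒳). Set P_λ^L = Q_λ R_λ. If μ_λ are probability measures with μ_λ P_λ^L = μ_λ, then every weak* limit point μ̂ of (μ_λ) as λ → 0 satisfies μ̂ (QΠ) = μ̂, i.e., μ̂ is an invariant probability measure of QΠ. -/
/-!
Test the invariance `μ_λ P_λ^L = μ_λ` against a continuous `f`: it says `μ_λ[f] = μ_λ[P_λ^L f]`,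
and `P_λ^L f = Q_λ (R_λ f)` is uniformly within `‖R_λ f − Πf‖_∞ + ‖Q_λ(Πf) − Q(Πf)‖_∞` of the
continuous function `QΠf` (the Feller property of `Π` is what makes `‖Q_λ(Πf) − Q(Πf)‖_∞ → 0`
available). Hence `μ_λ[f] − μ_λ[QΠf] → 0`; since `f` and `QΠf` are both continuous (Feller property
of `Q`), weak* convergence along `λ_n` gives `μ̂[f] = μ̂[QΠf] = (μ̂ QΠ)[f]`, and continuous functions
determine a finite Borel measure on a metric space.
-/

open MeasureTheory Filter ProbabilityTheory

namespace MeasureTheory.Measure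

variable {α β E : Type*} [MeasurableSpace α] [MeasurableSpace β]
  [NormedAddCommGroup E] [NormedSpace ℝ E]

theorem integral_bind {m : Measure α} {K : α → Measure β} (hK : Measurable K) {f : β → E}
    (hf : Integrable f (m.bind K)) :
    ∫ y, f y ∂(m.bind K) = ∫ x, ∫ y, f y ∂(K x) ∂m := by
  let κ : Kernel α β := ⟨K, hK⟩
  change ∫ y, f y ∂(κ ∘ₘ m) = _
  change Integrable f (κ ∘ₘ m) at hf
  rw [comp_eq_comp_const_apply] at hf ⊢
  exact Kernel.integral_comp hf

end MeasureTheory.Measure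

theorem ContinuousMap.integrable {X E : Type*} [TopologicalSpace X] [CompactSpace X]
    [MeasurableSpace X] [OpensMeasurableSpace X] [NormedAddCommGroup E]
    (f : C(X, E)) (μ : Measure X) [IsFiniteMeasure μ] : Integrable f μ :=
  f.continuous.integrable_of_hasCompactSupport (HasCompactSupport.of_compactSpace _)

theorem MeasureTheory.ext_of_forall_integral_continuousMap_eq {X : Type*} [TopologicalSpace X]
    [CompactSpace X] [HasOuterApproxClosed X] [MeasurableSpace X] [BorelSpace X]
    {μ ν : Measure X} [IsFiniteMeasure μ] [IsFiniteMeasure ν]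
    (h : ∀ f : C(X, ℝ), ∫ x, f x ∂μ = ∫ x, f x ∂ν) : μ = ν :=
  ext_of_forall_integral_eq_of_IsFiniteMeasure fun f => h f.toContinuousMap

section BoundedIntegrands

variable {α β : Type*} [MeasurableSpace α] [MeasurableSpace β]

theorem abs_integral_le_of_forall_abs_le {ν : Measure α} [IsProbabilityMeasure ν] {g : α → ℝ}
    {C : ℝ} (hg : ∀ x, |g x| ≤ C) : |∫ x, g x ∂ν| ≤ C := by
  simpa using norm_integral_le_of_norm_le_const (μ := ν) (f := g) (Eventually.of_forall hg)

theorem abs_integral_sub_integral_le {ν : Measure α} [IsProbabilityMeasure ν] {g h : α → ℝ}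
    (hg : Integrable g ν) (hh : Integrable h ν) {ε : ℝ} (hε : ∀ x, |g x - h x| ≤ ε) :
    |∫ x, g x ∂ν - ∫ x, h x ∂ν| ≤ ε := by
  rw [← integral_sub hg hh]
  exact abs_integral_le_of_forall_abs_le hε

theorem isProbabilityMeasure_bind_of_forall {m : Measure α} [IsProbabilityMeasure m]
    {K : α → Measure β} (hK : Measurable K) [∀ x, IsProbabilityMeasure (K x)] :
    IsProbabilityMeasure (m.bind K) :=
  isProbabilityMeasure_bind hK.aemeasurable (ae_of_all _ inferInstance)

theorem integrable_integral_of_forall_abs_le {K : α → Measure β} (hK : Measurable K)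
    [∀ x, IsProbabilityMeasure (K x)] {f : β → ℝ} (hf : StronglyMeasurable f) {C : ℝ}
    (hfC : ∀ y, |f y| ≤ C) (ν : Measure α) [IsFiniteMeasure ν] :
    Integrable (fun x => ∫ y, f y ∂(K x)) ν :=
  .of_bound (StronglyMeasurable.integral_kernel (κ := ⟨K, hK⟩) hf).aestronglyMeasurable C
    (ae_of_all _ fun _ => abs_integral_le_of_forall_abs_le hfC)

end BoundedIntegrands

section KernelEstimates

variable {X : Type*} [TopologicalSpace X] [CompactSpace X] [MeasurableSpace X]

/-- The range is bounded by `2‖g‖`; an unbounded range would make `⨆` the junk value `0`. -/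
theorem abs_integral_sub_integral_le_iSup {α : Type*} (K K' : α → Measure X)
    [∀ x, IsProbabilityMeasure (K x)] [∀ x, IsProbabilityMeasure (K' x)] (g : C(X, ℝ)) (x : α) :
    |∫ y, g y ∂(K x) - ∫ y, g y ∂(K' x)| ≤ ⨆ x, |∫ y, g y ∂(K x) - ∫ y, g y ∂(K' x)| := by
  refine le_ciSup (f := fun x => |∫ y, g y ∂(K x) - ∫ y, g y ∂(K' x)|) ⟨‖g‖ + ‖g‖, ?_⟩ x
  rintro _ ⟨x, rfl⟩
  have hg : ∀ y, |g y| ≤ ‖g‖ := g.norm_coe_le_norm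
  exact (abs_sub _ _).trans
    (add_le_add (abs_integral_le_of_forall_abs_le hg) (abs_integral_le_of_forall_abs_le hg))

variable [OpensMeasurableSpace X] {B Pi : X → Measure X} [∀ y, IsProbabilityMeasure (B y)]
  [∀ y, IsProbabilityMeasure (Pi y)]

theorem abs_integral_bind_sub_integral_le {α : Type*} {A Q : α → Measure X}
    [∀ x, IsProbabilityMeasure (A x)] [∀ x, IsProbabilityMeasure (Q x)] (hB : Measurable B) (f Pif : C(X, ℝ))
    (hPif : ∀ y, Pif y = ∫ z, f z ∂(Pi y)) (x : α) :
    |∫ z, f z ∂((A x).bind B) - ∫ y, Pif y ∂(Q x)| ≤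
      (⨆ y, |∫ z, f z ∂(B y) - ∫ z, f z ∂(Pi y)|) +
        ⨆ x, |∫ y, Pif y ∂(A x) - ∫ y, Pif y ∂(Q x)| := by
  have : IsProbabilityMeasure ((A x).bind B) := isProbabilityMeasure_bind_of_forall hB
  have hBf : Integrable (fun y => ∫ z, f z ∂(B y)) (A x) :=
    integrable_integral_of_forall_abs_le hB f.continuous.stronglyMeasurable f.norm_coe_le_norm _
  rw [Measure.integral_bind hB (f.integrable _)]
  calc _ ≤ |∫ y, ∫ z, f z ∂(B y) ∂(A x) - ∫ y, Pif y ∂(A x)| +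
        |∫ y, Pif y ∂(A x) - ∫ y, Pif y ∂(Q x)| := abs_sub_le _ _ _
    _ ≤ _ := by
      gcongr
      · refine abs_integral_sub_integral_le hBf (Pif.integrable _) fun y => ?_
        rw [hPif]
        exact abs_integral_sub_integral_le_iSup B Pi f y
      · exact abs_integral_sub_integral_le_iSup A Q Pif x

theorem abs_integral_sub_integral_le_of_bind_eq {A Q : X → Measure X} (hA : Measurable A)
    [∀ x, IsProbabilityMeasure (A x)] [∀ x, IsProbabilityMeasure (Q x)] (hB : Measurable B)
    {μ : Measure X} [IsProbabilityMeasure μ] (hμ : μ.bind (fun x => (A x).bind B) = μ)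
    (f Pif QPif : C(X, ℝ)) (hPif : ∀ y, Pif y = ∫ z, f z ∂(Pi y))
    (hQPif : ∀ x, QPif x = ∫ y, Pif y ∂(Q x)) :
    |∫ x, f x ∂μ - ∫ x, QPif x ∂μ| ≤
      (⨆ y, |∫ z, f z ∂(B y) - ∫ z, f z ∂(Pi y)|) +
        ⨆ x, |∫ y, Pif y ∂(A x) - ∫ y, Pif y ∂(Q x)| := by
  have hAB : Measurable fun x => (A x).bind B := (Measure.measurable_bind' hB).comp hA
  have : ∀ x, IsProbabilityMeasure ((A x).bind B) := fun x =>
    isProbabilityMeasure_bind_of_forall hB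
  have : IsProbabilityMeasure (μ.bind fun x => (A x).bind B) :=
    isProbabilityMeasure_bind_of_forall hAB
  nth_rewrite 1 [← hμ]
  rw [Measure.integral_bind hAB (f.integrable _)]
  refine abs_integral_sub_integral_le
    (integrable_integral_of_forall_abs_le hAB f.continuous.stronglyMeasurable f.norm_coe_le_norm _)
    (QPif.integrable _) fun x => ?_
  rw [hQPif]
  exact abs_integral_bind_sub_integral_le hB f Pif hPif x

end KernelEstimates

/-- On a compact metric space, let `Q`, `Π` be Feller kernels, `Q_λ`
kernels with `‖Q_λ g − Qg‖_∞ → 0` and `R_λ` kernels with `‖R_λ f − Πf‖_∞ → 0` as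
`λ → 0⁺`. If `μ_λ` are probability measures invariant for `P_λ^L = Q_λ R_λ`, then
every weak* limit point `μ̂` of `(μ_λ)` as `λ → 0⁺` is invariant for `QΠ`. -/
theorem stmt_9
    {X : Type*} [MetricSpace X] [CompactSpace X] [MeasurableSpace X] [BorelSpace X]
    (Q Pi0 : X → Measure X)
    (hQ : ∀ x, IsProbabilityMeasure (Q x)) (hQm : Measurable Q)
    (hPi0 : ∀ x, IsProbabilityMeasure (Pi0 x)) (hPi0m : Measurable Pi0)
    (hQFeller : ∀ f : C(X, ℝ), Continuous fun x => ∫ y, f y ∂(Q x))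
    (hPiFeller : ∀ f : C(X, ℝ), Continuous fun x => ∫ y, f y ∂(Pi0 x))
    (Ql Rl : ℝ → X → Measure X)
    (hQl : ∀ l x, IsProbabilityMeasure (Ql l x)) (hQlm : ∀ l, Measurable (Ql l))
    (hRl : ∀ l x, IsProbabilityMeasure (Rl l x)) (hRlm : ∀ l, Measurable (Rl l))
    -- ‖Q_λ g − Q g‖_∞ → 0 as λ → 0⁺
    (hQconv : ∀ g : C(X, ℝ),
      Tendsto (fun l : ℝ => ⨆ x : X, |(∫ y, g y ∂(Ql l x)) - ∫ y, g y ∂(Q x)|)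
        (nhdsWithin 0 (Set.Ioi 0)) (nhds 0))
    -- ‖R_λ f − Π f‖_∞ → 0 as λ → 0⁺
    (hRconv : ∀ f : C(X, ℝ),
      Tendsto (fun l : ℝ => ⨆ x : X, |(∫ y, f y ∂(Rl l x)) - ∫ y, f y ∂(Pi0 x)|)
        (nhdsWithin 0 (Set.Ioi 0)) (nhds 0))
    (μ : ℝ → Measure X) (hμ : ∀ l, IsProbabilityMeasure (μ l))
    -- invariance : μ_λ (Q_λ R_λ) = μ_λ for all λ > 0
    (hinv : ∀ l : ℝ, 0 < l →
      (μ l).bind (fun x => (Ql l x).bind (Rl l)) = μ l)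
    -- μ̂ : a weak* limit point of (μ_λ) along a sequence λ_n → 0⁺
    (μhat : Measure X) (hμhat : IsProbabilityMeasure μhat)
    (lam : ℕ → ℝ) (hlampos : ∀ n, 0 < lam n)
    (hlam0 : Tendsto lam atTop (nhds 0))
    (hweak : ∀ f : C(X, ℝ),
      Tendsto (fun n => ∫ x, f x ∂(μ (lam n))) atTop (nhds (∫ x, f x ∂μhat))) :
    μhat.bind (fun x => (Q x).bind Pi0) = μhat := by
  have hlam : Tendsto lam atTop (nhdsWithin 0 (Set.Ioi 0)) :=
    tendsto_nhdsWithin_iff.2 ⟨hlam0, Eventually.of_forall hlampos⟩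
  have hQPi : Measurable fun x => (Q x).bind Pi0 := (Measure.measurable_bind' hPi0m).comp hQm
  have : ∀ x, IsProbabilityMeasure ((Q x).bind Pi0) := fun _ =>
    isProbabilityMeasure_bind_of_forall hPi0m
  have : IsProbabilityMeasure (μhat.bind fun x => (Q x).bind Pi0) :=
    isProbabilityMeasure_bind_of_forall hQPi
  refine ext_of_forall_integral_continuousMap_eq fun f => ?_
  let Pif : C(X, ℝ) := ⟨_, hPiFeller f⟩
  let QPif : C(X, ℝ) := ⟨_, hQFeller Pif⟩
  have hgap : ∫ x, f x ∂μhat - ∫ x, QPif x ∂μhat = 0 :=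
    tendsto_nhds_unique ((hweak f).sub (hweak QPif)) <| squeeze_zero_norm
      (fun n => abs_integral_sub_integral_le_of_bind_eq (hQlm _) (hRlm _)
        (hinv _ (hlampos n)) f Pif QPif (fun _ => rfl) (fun _ => rfl))
      (by simpa [Function.comp_def] using ((hRconv f).add (hQconv Pif)).comp hlam)
  have hQPif : ∫ x, ∫ y, f y ∂((Q x).bind Pi0) ∂μhat = ∫ x, QPif x ∂μhat :=
    integral_congr_ae (ae_of_all _ fun x => Measure.integral_bind hPi0m (f.integrable _))
  rw [Measure.integral_bind hQPi (f.integrable _), hQPif]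
  linarith
end

section
/- Let 𝒮 be a finite state space and P̂ an irreducible stochastic matrix on 𝒮. For a nonempty subset W ⊆ 𝒮, a W-graph is a function g assigning to each state in 𝒮∖W exactly one outgoing arrow (to a different state) such that the resulting directed graph has no cycles (equivalently, from every state in 𝒮∖W there is a directed path into W). With ϖ(g) = Π_{(s→s')∈g} P̂_{ss'} and R_s = Σ_{g ∈ 𝒢{s}} ϖ(g), the unique stationary distribution π of P̂ satisfies π_s = R_s / Σ_{s'∈𝒮} R_{s'} for every s ∈ 𝒮. -/
/-!
Call a self-map `h` of the state space unicyclic at `s'` if every state reaches `s'` after at least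
one step, and weight it by `∏ₓ P x (h x)`. Two bijections onto these maps compute their total weight
twice: `(g, t) ↦ g[s' ↦ t]` on `{s'}`-graphs `g` and states `t` gives `R_{s'} ∑ₜ P_{s't} = R_{s'}`,
and `(s, g) ↦ g[s ↦ s']` on `{s}`-graphs over all roots `s`, inverted by cutting the cycle just
before `s'`, gives `∑ₛ R_s P_{ss'}`. Hence `R` is a stationary vector; it is positive by
irreducibility, and an irreducible nonnegative matrix has at most one stationary vector up to
scaling.
-/

open scoped Classical

/-- A `{s}`-graph (arborescence rooted at `s`): every state other than `s` has
exactly one outgoing arrow (encoded by the function `g`, canonically fixing `s`),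
arrows go to different states, and there are no cycles — equivalently, from every
state the iterates of `g` lead into `s`. -/
def IsWGraph {S : Type*} (s : S) (g : S → S) : Prop :=
  g s = s ∧ (∀ x, x ≠ s → g x ≠ x) ∧ ∀ x, ∃ k : ℕ, g^[k] x = s

/-- Product of transition probabilities along the arrows of the graph `g`. -/
def graphWeight {S : Type*} [Fintype S] [DecidableEq S]
    (P : Matrix S S ℝ) (s : S) (g : S → S) : ℝ :=
  ∏ x ∈ Finset.univ.erase s, P x (g x)

/-- `R_s`: sum of the weights of all `{s}`-graphs. -/
noncomputable def treeSum {S : Type*} [Fintype S] [DecidableEq S]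
    (P : Matrix S S ℝ) (s : S) : ℝ :=
  ∑ g ∈ Finset.univ.filter (fun g : S → S => IsWGraph s g), graphWeight P s g

open Function Finset Matrix

section Iterate

variable {α : Type*} [DecidableEq α] {f : α → α} {a : α}

theorem iterate_update_eq_of_forall_lt_ne (t : α) {x : α} {k : ℕ}
    (hk : ∀ i < k, f^[i] x ≠ a) : (update f a t)^[k] x = f^[k] x := by
  induction k generalizing x with
  | zero => rfl
  | succ k ih =>
    have hx : x ≠ a := hk 0 k.succ_pos
    rw [iterate_succ_apply, iterate_succ_apply, update_of_ne hx]
    exact ih fun i hi => by simpa only [iterate_succ_apply] using hk (i + 1) (by omega)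

theorem exists_iterate_update_eq (t : α) {x : α} (h : ∃ k, f^[k] x = a) :
    ∃ k, (update f a t)^[k] x = a :=
  ⟨Nat.find h, by
    rw [iterate_update_eq_of_forall_lt_ne t fun i hi => Nat.find_min h hi, Nat.find_spec h]⟩

end Iterate

section Unicyclic

variable {α : Type*} {s a : α} {g h : α → α}

theorem IsWGraph.eq_of_isPeriodicPt (hg : IsWGraph s g) {n : ℕ} {y : α} (hn : 0 < n)
    (hy : IsPeriodicPt g n y) : y = s := by
  obtain ⟨k, hk⟩ := hg.2.2 y
  calc y = g^[n * k] y := (hy.mul_const k).eq.symm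
    _ = g^[n * k - k] (g^[k] y) := by
      rw [← iterate_add_apply, Nat.sub_add_cancel (Nat.le_mul_of_pos_left k hn)]
    _ = s := by rw [hk, iterate_fixed hg.1]

/-- The functional graph of `h` is connected and its unique cycle passes through `a`. -/
def IsUnicyclicAt (a : α) (h : α → α) : Prop :=
  ∀ x, ∃ k, h^[k + 1] x = a

noncomputable def cyclePred (h : α → α) (a : α) : α :=
  h^[minimalPeriod h a - 1] a

theorem IsUnicyclicAt.minimalPeriod_pos (hh : IsUnicyclicAt a h) : 0 < minimalPeriod h a :=
  have ⟨k, hk⟩ := hh a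
  IsPeriodicPt.minimalPeriod_pos k.succ_pos hk

theorem IsUnicyclicAt.apply_cyclePred (hh : IsUnicyclicAt a h) : h (cyclePred h a) = a := by
  rw [cyclePred, ← iterate_succ_apply' h, Nat.succ_eq_add_one,
    Nat.sub_add_cancel hh.minimalPeriod_pos, iterate_minimalPeriod]

theorem IsUnicyclicAt.isUnicyclicAt_cyclePred (hh : IsUnicyclicAt a h) :
    IsUnicyclicAt (cyclePred h a) h := fun x =>
  have ⟨k, hk⟩ := hh x
  ⟨minimalPeriod h a - 1 + k, by rw [add_assoc, iterate_add_apply, hk]; rfl⟩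

end Unicyclic

section Graphs

variable {α : Type*} [DecidableEq α] {s a : α} {g h : α → α}

theorem IsWGraph.update_root_self (hg : IsWGraph s g) : update g s s = g :=
  update_eq_self_iff.2 hg.1.symm

theorem IsWGraph.isUnicyclicAt_update_self (hg : IsWGraph s g) (t : α) :
    IsUnicyclicAt s (update g s t) := fun x => by
  obtain ⟨k, hk⟩ := exists_iterate_update_eq t (hg.2.2 (update g s t x))
  exact ⟨k, by rwa [iterate_succ_apply]⟩

theorem IsWGraph.isUnicyclicAt_update (hg : IsWGraph s g) (a : α) :
    IsUnicyclicAt a (update g s a) := fun x => by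
  obtain ⟨k, hk⟩ := exists_iterate_update_eq a (hg.2.2 x)
  exact ⟨k, by rw [iterate_succ_apply', hk, update_self]⟩

theorem IsUnicyclicAt.isWGraph_update (hh : IsUnicyclicAt a h) : IsWGraph a (update h a a) := by
  refine ⟨update_self .., fun x hx hfix => ?_, fun x => exists_iterate_update_eq a ?_⟩
  · rw [update_of_ne hx] at hfix
    obtain ⟨k, hk⟩ := hh x
    exact hx (by rwa [iterate_fixed hfix] at hk)
  · obtain ⟨k, hk⟩ := hh x
    exact ⟨k + 1, hk⟩

theorem IsWGraph.cyclePred_update (hg : IsWGraph s g) (a : α) : cyclePred (update g s a) a = s := by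
  set h := update g s a
  have hreach := hg.2.2 a
  set j := Nat.find hreach
  have agree : ∀ i ≤ j, h^[i] a = g^[i] a := fun i hi =>
    iterate_update_eq_of_forall_lt_ne a fun l hl => Nat.find_min hreach (by omega)
  have hper : IsPeriodicPt h (j + 1) a := by
    rw [IsPeriodicPt, IsFixedPt, iterate_succ_apply', agree j le_rfl, Nat.find_spec hreach]
    exact update_self s a g
  have hp := hper.minimalPeriod_pos j.succ_pos
  have hpj : minimalPeriod h a = j + 1 := by
    refine le_antisymm (hper.minimalPeriod_le j.succ_pos)
      (Nat.succ_le_of_lt (lt_of_not_ge fun hle => ?_))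
    have hga : IsPeriodicPt g (minimalPeriod h a) a := by
      rw [IsPeriodicPt, IsFixedPt, ← agree _ (by omega)]
      exact iterate_minimalPeriod
    have : j = 0 := (Nat.find_eq_zero hreach).2 (hg.eq_of_isPeriodicPt hp hga)
    omega
  rw [cyclePred, hpj, Nat.add_sub_cancel, agree j le_rfl, Nat.find_spec hreach]

end Graphs

section TreeSum

variable {S : Type*} [Fintype S] [DecidableEq S] {P : Matrix S S ℝ}

theorem graphWeight_mul_eq_prod_update (P : Matrix S S ℝ) (s t : S) (g : S → S) :
    graphWeight P s g * P s t = ∏ x, P x (update g s t x) := by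
  rw [← prod_erase_mul univ _ (mem_univ s), update_self, graphWeight]
  congr 1
  exact prod_congr rfl fun x hx => by rw [update_of_ne (ne_of_mem_erase hx)]

theorem treeSum_eq_sum_isUnicyclicAt (hrow : ∀ i, ∑ j, P i j = 1) (a : S) :
    treeSum P a = ∑ h ∈ univ.filter (IsUnicyclicAt a), ∏ x, P x (h x) := by
  calc treeSum P a
      = ∑ p ∈ univ.filter (IsWGraph a) ×ˢ univ, graphWeight P a p.1 * P a p.2 := by
        simp only [sum_product, ← mul_sum, hrow, mul_one, treeSum]
    _ = _ := by
      refine sum_nbij' (fun p => update p.1 a p.2) (fun h => (update h a a, h a))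
        (fun p hp => ?_) (fun h hh => ?_) (fun p hp => ?_) (fun h _ => ?_)
        (fun p _ => graphWeight_mul_eq_prod_update P a p.2 p.1)
      · simp only [mem_product, mem_filter, mem_univ, true_and, and_true] at hp ⊢
        exact hp.isUnicyclicAt_update_self p.2
      · simp only [mem_product, mem_filter, mem_univ, true_and, and_true] at hh ⊢
        exact hh.isWGraph_update
      · simp only [mem_product, mem_filter, mem_univ, true_and, and_true] at hp
        simp [hp.update_root_self]
      · simp

theorem sum_treeSum_mul_eq_sum_isUnicyclicAt (a : S) :
    ∑ s, treeSum P s * P s a = ∑ h ∈ univ.filter (IsUnicyclicAt a), ∏ x, P x (h x) := by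
  calc ∑ s, treeSum P s * P s a
      = ∑ p ∈ univ.filter (fun p : S × (S → S) => IsWGraph p.1 p.2),
          graphWeight P p.1 p.2 * P p.1 a := by
        rw [sum_filter, ← univ_product_univ, sum_product]
        exact sum_congr rfl fun s _ => by rw [treeSum, sum_mul, sum_filter]
    _ = _ := by
      refine sum_nbij' (fun p => update p.2 p.1 a)
        (fun h => (cyclePred h a, update h (cyclePred h a) (cyclePred h a)))
        (fun p hp => ?_) (fun h hh => ?_) (fun p hp => ?_) (fun h hh => ?_)
        (fun p _ => graphWeight_mul_eq_prod_update P p.1 a p.2)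
      · simp only [mem_filter, mem_univ, true_and] at hp ⊢
        exact hp.isUnicyclicAt_update a
      · simp only [mem_filter, mem_univ, true_and] at hh ⊢
        exact hh.isUnicyclicAt_cyclePred.isWGraph_update
      · simp only [mem_filter, mem_univ, true_and] at hp
        simp [hp.cyclePred_update, hp.update_root_self]
      · simp only [mem_filter, mem_univ, true_and] at hh
        simp [hh.apply_cyclePred]

theorem treeSum_vecMul (hrow : ∀ i, ∑ j, P i j = 1) : treeSum P ᵥ* P = treeSum P :=
  funext fun a => (sum_treeSum_mul_eq_sum_isUnicyclicAt a).trans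
    (treeSum_eq_sum_isUnicyclicAt hrow a).symm

end TreeSum

theorem exists_isWGraph_of_forall_exists_lt {α : Type*} (s : α) (r : α → α → Prop) (d : α → ℕ)
    (hstep : ∀ x ≠ s, ∃ y, r x y ∧ d y < d x) : ∃ g, IsWGraph s g ∧ ∀ x ≠ s, r x (g x) := by
  choose f hfr hfd using hstep
  let g x := if hx : x = s then s else f x hx
  have hg : ∀ x (hx : x ≠ s), g x = f x hx := fun x hx => dif_neg hx
  refine ⟨g, ⟨dif_pos rfl, fun x hx hfix => ?_, fun x => ?_⟩, fun x hx => hg x hx ▸ hfr x hx⟩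
  · exact (hfd x hx).ne (by rw [← hg x hx, hfix])
  · induction x using (measure d).wf.induction with
    | _ x ih =>
      by_cases hx : x = s
      · exact ⟨0, hx⟩
      · obtain ⟨k, hk⟩ := ih (f x hx) (hfd x hx)
        exact ⟨k + 1, by rw [iterate_succ_apply, hg x hx, hk]⟩

theorem vecMul_pow_eq_self {n R : Type*} [Fintype n] [DecidableEq n] [Semiring R]
    {P : Matrix n n R} {μ : n → R} (hμ : μ ᵥ* P = μ) (k : ℕ) : μ ᵥ* (P ^ k) = μ := by
  induction k with
  | zero => simp
  | succ k ih => rw [pow_succ, ← vecMul_vecMul, ih, hμ]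

section Nonneg

variable {n R : Type*} [Fintype n] [DecidableEq n] [Field R] [LinearOrder R]
  [IsStrictOrderedRing R] {P : Matrix n n R}

theorem exists_pos_apply_of_pow_succ_apply_pos (hP : ∀ i j, 0 ≤ P i j) {k : ℕ} {i j : n}
    (h : 0 < (P ^ (k + 1)) i j) : ∃ l, 0 < P i l ∧ 0 < (P ^ k) l j := by
  rw [pow_succ', mul_apply] at h
  obtain ⟨l, -, hl⟩ := (sum_pos_iff_of_nonneg fun l _ =>
    mul_nonneg (hP i l) (pow_apply_nonneg hP k l j)).1 h
  exact ⟨l, pos_of_mul_pos_left hl (pow_apply_nonneg hP k l j),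
    pos_of_mul_pos_right hl (hP i l)⟩

theorem eq_zero_of_vecMul_eq_self_of_apply_eq_zero (hP : ∀ i j, 0 ≤ P i j)
    (hirr : ∀ i j, ∃ k, 0 < (P ^ k) i j) {μ : n → R} (hμ : μ ᵥ* P = μ) (hμ0 : ∀ i, 0 ≤ μ i)
    {j : n} (hj : μ j = 0) : μ = 0 := by
  funext i
  obtain ⟨k, hk⟩ := hirr i j
  have hsum : ∑ l, μ l * (P ^ k) l j = 0 := (congrFun (vecMul_pow_eq_self hμ k) j).trans hj
  have := (sum_eq_zero_iff_of_nonneg fun l _ =>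
    mul_nonneg (hμ0 l) (pow_apply_nonneg hP k l j)).1 hsum i (mem_univ i)
  exact (mul_eq_zero.1 this).resolve_right hk.ne'

theorem eq_smul_of_vecMul_eq_self (hP : ∀ i j, 0 ≤ P i j) (hirr : ∀ i j, ∃ k, 0 < (P ^ k) i j)
    {μ ν : n → R} (hμ : μ ᵥ* P = μ) (hν : ν ᵥ* P = ν) (hνpos : ∀ i, 0 < ν i) :
    ∃ c : R, μ = c • ν := by
  cases isEmpty_or_nonempty n
  · exact ⟨0, Subsingleton.elim _ _⟩
  -- `μ - c • ν` with `c = min μ/ν` is a nonnegative stationary vector vanishing somewhere.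
  obtain ⟨j, -, hj⟩ := exists_min_image univ (fun i => μ i / ν i) univ_nonempty
  refine ⟨μ j / ν j, sub_eq_zero.1 (eq_zero_of_vecMul_eq_self_of_apply_eq_zero hP hirr
    (j := j) ?_ (fun i => ?_) ?_)⟩
  · rw [sub_vecMul, smul_vecMul, hμ, hν]
  · simpa using (le_div_iff₀ (hνpos i)).1 (hj i (mem_univ i))
  · simp [div_mul_cancel₀ _ (hνpos j).ne']

end Nonneg

theorem treeSum_pos {S : Type*} [Fintype S] [DecidableEq S] {P : Matrix S S ℝ}
    (hP : ∀ i j, 0 ≤ P i j) (hirr : ∀ i j, ∃ k, 0 < (P ^ k) i j) (s : S) : 0 < treeSum P s := by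
  -- Taking the first step of a shortest positive path to `s` from every state gives an `{s}`-graph.
  let d x := Nat.find (hirr x s)
  have hstep : ∀ x ≠ s, ∃ y, 0 < P x y ∧ d y < d x := by
    intro x hx
    obtain ⟨k, hk⟩ : ∃ k, d x = k + 1 := Nat.exists_eq_succ_of_ne_zero fun h0 => by
      simpa [d, h0, one_apply_ne hx] using Nat.find_spec (hirr x s)
    have hspec : 0 < (P ^ (k + 1)) x s := hk ▸ Nat.find_spec (hirr x s)
    obtain ⟨y, hxy, hys⟩ := exists_pos_apply_of_pow_succ_apply_pos hP hspec
    exact ⟨y, hxy, hk ▸ Nat.lt_succ_of_le (Nat.find_min' _ hys)⟩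
  obtain ⟨g, hg, hgpos⟩ := exists_isWGraph_of_forall_exists_lt s _ d hstep
  exact sum_pos' (fun g _ => prod_nonneg fun x _ => hP _ _)
    ⟨g, mem_filter.2 ⟨mem_univ g, hg⟩, prod_pos fun x hx => hgpos x (ne_of_mem_erase hx)⟩

theorem stmt_12_general
    {S : Type*} [Fintype S] [DecidableEq S]
    (P : Matrix S S ℝ)
    (hnonneg : ∀ s s', 0 ≤ P s s')
    (hrow : ∀ s, ∑ s', P s s' = 1)
    (hirr : ∀ s s', ∃ n : ℕ, 0 < (P ^ n) s s')
    (π : S → ℝ)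
    (hπ1 : ∑ s, π s = 1)
    (hstat : ∀ s', ∑ s, π s * P s s' = π s') :
    ∀ s, π s = treeSum P s / ∑ s', treeSum P s' := by
  intro s
  have hR := treeSum_pos hnonneg hirr
  obtain ⟨c, rfl⟩ :=
    eq_smul_of_vecMul_eq_self hnonneg hirr (funext hstat) (treeSum_vecMul hrow) hR
  have hZ : 0 < ∑ s', treeSum P s' := sum_pos (fun t _ => hR t) ⟨s, mem_univ s⟩
  simp only [Pi.smul_apply, smul_eq_mul, ← mul_sum] at hπ1 ⊢
  rw [eq_div_iff hZ.ne', mul_right_comm, hπ1, one_mul]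

/-- Freidlin–Wentzell tree formula: for an irreducible stochastic
matrix `P̂` on a finite state space, any stationary distribution `π` satisfies
`π_s = R_s / Σ_{s'} R_{s'}` where `R_s` is the sum over all `{s}`-graphs of the
products of transition probabilities along the arrows. -/
theorem stmt_12
    {S : Type*} [Fintype S] [DecidableEq S] [Nonempty S]
    (P : Matrix S S ℝ)
    (hnonneg : ∀ s s', 0 ≤ P s s')
    (hrow : ∀ s, ∑ s', P s s' = 1)
    (hirr : ∀ s s', ∃ n : ℕ, 0 < (P ^ n) s s')
    (π : S → ℝ)
    (hπ0 : ∀ s, 0 ≤ π s) (hπ1 : ∑ s, π s = 1)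
    (hstat : ∀ s', ∑ s, π s * P s s' = π s') :
    ∀ s, π s = treeSum P s / ∑ s', treeSum P s' :=
  stmt_12_general P hnonneg hrow hirr π hπ1 hstat
end

section
/- Let (πᵉ)_{ε>0} be a family of probability vectors on a finite set 𝒮 partitioned into sets 𝒮₀, 𝒮₁, ..., 𝒮_K, and S̄ ⊆ 𝒮₀ with complement in 𝒮₀ denoted S̃. Suppose πᵉ = πᵉ P̂ᵉ for stochastic matrices P̂ᵉ such that, as ε → 0: (i) P̂ᵉ_{s̄,s} → 0 for all s̄ ∈ S̄ and s ∉ S̄; (ii) there exists δ̃ > 0 independent of ε with Σ_{s̄∈S̄} P̂ᵉ_{s,s̄} ≥ δ̃ for all s ∈ S̃; (iii) there exists δ̂ > 0 independent of ε with Σ_{s'∈𝒮_k} P̂ᵉ_{s,s'} ≥ δ̂ for all s ∈ 𝒮_{k+1} and all k ≥ 0. Then πᵉ_s → 0 as ε → 0 for every s ∉ S̄. -/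
open Filter

/-- Let `πᵉ` be stationary distributions of stochastic matrices `P̂ᵉ`
on a finite set `𝒮` partitioned into `𝒮₀, …, 𝒮_K` with `S̄ ⊆ 𝒮₀`. If, as `ε → 0⁺`:
(i) the transition probabilities out of `S̄` vanish; (ii) the transition mass from
`S̃ = 𝒮₀ \ S̄` into `S̄` is bounded below by some `δ̃ > 0` uniformly in `ε`; and
(iii) the transition mass from `𝒮_{k+1}` into `𝒮_k` is bounded below by some
`δ̂ > 0` uniformly in `ε` and `k`, then `πᵉ_s → 0` for every `s ∉ S̄`. -/
theorem stmt_16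
    {S : Type*} [Fintype S] [DecidableEq S]
    (K : ℕ) (part : ℕ → Finset S)
    (hdisj : ∀ k l, k ≠ l → Disjoint (part k) (part l))
    (hcover : Finset.univ = (Finset.range (K + 1)).biUnion part)
    (Sbar : Finset S) (hSbar : Sbar ⊆ part 0)
    (Pe : ℝ → S → S → ℝ)
    (hP0 : ∀ e : ℝ, 0 < e → ∀ s s', 0 ≤ Pe e s s')
    (hP1 : ∀ e : ℝ, 0 < e → ∀ s, ∑ s', Pe e s s' = 1)
    (πe : ℝ → S → ℝ)
    (hπ0 : ∀ e : ℝ, 0 < e → ∀ s, 0 ≤ πe e s)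
    (hπ1 : ∀ e : ℝ, 0 < e → ∑ s, πe e s = 1)
    (hstat : ∀ e : ℝ, 0 < e → ∀ s', ∑ s, πe e s * Pe e s s' = πe e s')
    -- (i)
    (hi : ∀ sb ∈ Sbar, ∀ s ∉ Sbar,
      Tendsto (fun e => Pe e sb s) (nhdsWithin 0 (Set.Ioi 0)) (nhds 0))
    -- (ii)
    (hii : ∃ δ : ℝ, 0 < δ ∧ ∀ e : ℝ, 0 < e →
      ∀ s ∈ part 0 \ Sbar, δ ≤ ∑ sb ∈ Sbar, Pe e s sb)
    -- (iii)
    (hiii : ∃ δ : ℝ, 0 < δ ∧ ∀ e : ℝ, 0 < e →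
      ∀ k : ℕ, ∀ s ∈ part (k + 1), δ ≤ ∑ s' ∈ part k, Pe e s s') :
    ∀ s ∉ Sbar,
      Tendsto (fun e => πe e s) (nhdsWithin 0 (Set.Ioi 0)) (nhds 0) := by
  obtain ⟨δt, hδt, hδtb⟩ := hii
  obtain ⟨δh, hδh, hδhb⟩ := hiii
  set L := nhdsWithin (0:ℝ) (Set.Ioi 0) with hL
  have hπle1 : ∀ e : ℝ, 0 < e → ∀ s, πe e s ≤ 1 := by
    intro e he s
    rw [← hπ1 e he]
    exact Finset.single_le_sum (fun i _ => hπ0 e he i) (Finset.mem_univ s)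
  -- balance equation: outflow = inflow
  have balance : ∀ e : ℝ, 0 < e → ∀ A : Finset S,
      ∑ s ∈ A, πe e s * ∑ s' ∈ Aᶜ, Pe e s s'
        = ∑ s ∈ Aᶜ, πe e s * ∑ s' ∈ A, Pe e s s' := by
    intro e he A
    have h1 : ∑ s' ∈ A, πe e s' = ∑ s, πe e s * ∑ s' ∈ A, Pe e s s' := by
      calc ∑ s' ∈ A, πe e s' = ∑ s' ∈ A, ∑ s, πe e s * Pe e s s' :=
            Finset.sum_congr rfl fun s' _ => (hstat e he s').symm
        _ = ∑ s, ∑ s' ∈ A, πe e s * Pe e s s' := Finset.sum_comm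
        _ = ∑ s, πe e s * ∑ s' ∈ A, Pe e s s' := by
            simp [Finset.mul_sum]
    have h3 : ∑ s, πe e s * ∑ s' ∈ A, Pe e s s'
        = ∑ s ∈ A, πe e s * ∑ s' ∈ A, Pe e s s'
          + ∑ s ∈ Aᶜ, πe e s * ∑ s' ∈ A, Pe e s s' :=
      (Finset.sum_add_sum_compl A _).symm
    have h4 : ∑ s' ∈ A, πe e s'
        = ∑ s ∈ A, πe e s * ∑ s' ∈ A, Pe e s s'
          + ∑ s ∈ A, πe e s * ∑ s' ∈ Aᶜ, Pe e s s' := by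
      rw [← Finset.sum_add_distrib]
      refine Finset.sum_congr rfl fun s _ => ?_
      rw [← mul_add, Finset.sum_add_sum_compl A, hP1 e he s, mul_one]
    linarith
  set α : ℝ → ℝ := fun e => ∑ sb ∈ Sbar, ∑ s ∈ Sbarᶜ, Pe e sb s with hαdef
  have hα : Tendsto α L (nhds 0) := by
    have := tendsto_finset_sum Sbar (fun sb hsb =>
      tendsto_finset_sum (f := fun s e => Pe e sb s) Sbarᶜ
        (fun s hs => hi sb hsb s (Finset.mem_compl.mp hs)))
    simpa using this
  set M : ℕ → ℝ → ℝ := fun j e => ∑ s ∈ part j \ Sbar, πe e s with hMdef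
  have hMnn : ∀ j, ∀ e : ℝ, 0 < e → 0 ≤ M j e := fun j e he =>
    Finset.sum_nonneg fun s _ => hπ0 e he s
  -- outflow from Sbar is at most α
  have houtSbar : ∀ e : ℝ, 0 < e → ∀ A : Finset S, Sbar ⊆ A →
      ∑ s ∈ Sbar, πe e s * ∑ s' ∈ Aᶜ, Pe e s s' ≤ α e := by
    intro e he A hsub
    refine Finset.sum_le_sum fun s hs => ?_
    have h1 : ∑ s' ∈ Aᶜ, Pe e s s' ≤ ∑ s' ∈ Sbarᶜ, Pe e s s' :=
      Finset.sum_le_sum_of_subset_of_nonneg (Finset.compl_subset_compl.mpr hsub)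
        (fun i _ _ => hP0 e he s i)
    have h2 : 0 ≤ ∑ s' ∈ Aᶜ, Pe e s s' := Finset.sum_nonneg fun i _ => hP0 e he s i
    nlinarith [hπ0 e he s, hπle1 e he s]
  -- base bound
  have hM0 : ∀ e : ℝ, 0 < e → δt * M 0 e ≤ α e := by
    intro e he
    have hb := balance e he Sbar
    have hlow : δt * M 0 e ≤ ∑ s ∈ Sbarᶜ, πe e s * ∑ s' ∈ Sbar, Pe e s s' := by
      rw [hMdef, Finset.mul_sum]
      calc ∑ s ∈ part 0 \ Sbar, δt * πe e s
          ≤ ∑ s ∈ part 0 \ Sbar, πe e s * ∑ s' ∈ Sbar, Pe e s s' := by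
            refine Finset.sum_le_sum fun s hs => ?_
            have := hδtb e he s hs
            nlinarith [hπ0 e he s]
        _ ≤ ∑ s ∈ Sbarᶜ, πe e s * ∑ s' ∈ Sbar, Pe e s s' := by
            refine Finset.sum_le_sum_of_subset_of_nonneg ?_
              (fun i _ _ => mul_nonneg (hπ0 e he i)
                (Finset.sum_nonneg fun j _ => hP0 e he i j))
            intro s hs
            exact Finset.mem_compl.mpr (Finset.mem_sdiff.mp hs).2
    have hup := houtSbar e he Sbar (le_refl _)
    linarith
  -- cumulative unions
  set B : ℕ → Finset S := fun k => (Finset.range (k+1)).biUnion part with hBdef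
  have hSbarB : ∀ k, Sbar ⊆ B k := fun k =>
    hSbar.trans (Finset.subset_biUnion_of_mem part
      (Finset.mem_range.mpr (Nat.succ_pos k)))
  have hpartB : ∀ k, part (k+1) ⊆ (B k)ᶜ := by
    intro k s hs
    refine Finset.mem_compl.mpr fun hmem => ?_
    obtain ⟨j, hj, hsj⟩ := Finset.mem_biUnion.mp hmem
    have hjk : j < k + 1 := Finset.mem_range.mp hj
    exact Finset.disjoint_left.mp (hdisj (k+1) j (by omega)) hs hsj
  -- decomposition of B k minus Sbar
  have hBsd : ∀ k, B k \ Sbar = (Finset.range (k+1)).biUnion (fun j => part j \ Sbar) := by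
    intro k
    ext s
    simp only [Finset.mem_sdiff, Finset.mem_biUnion, hBdef]
    tauto
  have hBsum : ∀ k, ∀ e : ℝ, 0 < e →
      ∑ s ∈ B k \ Sbar, πe e s = ∑ j ∈ Finset.range (k+1), M j e := by
    intro k e he
    rw [hBsd k]
    refine Finset.sum_biUnion ?_
    intro j hj l hl hne
    exact (hdisj j l hne).mono (Finset.sdiff_subset) (Finset.sdiff_subset)
  -- inductive bound
  have hMk : ∀ k, ∀ e : ℝ, 0 < e →
      δh * M (k+1) e ≤ α e + ∑ j ∈ Finset.range (k+1), M j e := by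
    intro k e he
    have hb := balance e he (B k)
    -- inflow lower bound
    have hlow : δh * M (k+1) e ≤ ∑ s ∈ (B k)ᶜ, πe e s * ∑ s' ∈ B k, Pe e s s' := by
      rw [hMdef, Finset.mul_sum]
      calc ∑ s ∈ part (k+1) \ Sbar, δh * πe e s
          ≤ ∑ s ∈ part (k+1) \ Sbar, πe e s * ∑ s' ∈ B k, Pe e s s' := by
            refine Finset.sum_le_sum fun s hs => ?_
            have hs' : s ∈ part (k+1) := (Finset.mem_sdiff.mp hs).1
            have h1 : δh ≤ ∑ s' ∈ part k, Pe e s s' := hδhb e he k s hs'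
            have h2 : ∑ s' ∈ part k, Pe e s s' ≤ ∑ s' ∈ B k, Pe e s s' :=
              Finset.sum_le_sum_of_subset_of_nonneg
                (Finset.subset_biUnion_of_mem part
                  (Finset.mem_range.mpr (by omega)))
                (fun i _ _ => hP0 e he s i)
            nlinarith [hπ0 e he s]
        _ ≤ ∑ s ∈ (B k)ᶜ, πe e s * ∑ s' ∈ B k, Pe e s s' := by
            refine Finset.sum_le_sum_of_subset_of_nonneg ?_
              (fun i _ _ => mul_nonneg (hπ0 e he i)
                (Finset.sum_nonneg fun j _ => hP0 e he i j))
            exact fun s hs => hpartB k ((Finset.mem_sdiff.mp hs).1)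
    -- outflow upper bound
    have hup : ∑ s ∈ B k, πe e s * ∑ s' ∈ (B k)ᶜ, Pe e s s'
        ≤ α e + ∑ j ∈ Finset.range (k+1), M j e := by
      have hsplit : ∑ s ∈ B k \ Sbar, (πe e s * ∑ s' ∈ (B k)ᶜ, Pe e s s')
            + ∑ s ∈ Sbar, (πe e s * ∑ s' ∈ (B k)ᶜ, Pe e s s')
          = ∑ s ∈ B k, πe e s * ∑ s' ∈ (B k)ᶜ, Pe e s s' :=
        Finset.sum_sdiff (hSbarB k)
      have h1 : ∑ s ∈ Sbar, πe e s * ∑ s' ∈ (B k)ᶜ, Pe e s s' ≤ α e :=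
        houtSbar e he (B k) (hSbarB k)
      have h2 : ∑ s ∈ B k \ Sbar, (πe e s * ∑ s' ∈ (B k)ᶜ, Pe e s s')
          ≤ ∑ s ∈ B k \ Sbar, πe e s := by
        refine Finset.sum_le_sum fun s hs => ?_
        have hple : ∑ s' ∈ (B k)ᶜ, Pe e s s' ≤ 1 := by
          rw [← hP1 e he s]
          exact Finset.sum_le_sum_of_subset_of_nonneg (Finset.subset_univ _)
            (fun i _ _ => hP0 e he s i)
        have hpn : (0:ℝ) ≤ ∑ s' ∈ (B k)ᶜ, Pe e s s' :=
          Finset.sum_nonneg fun i _ => hP0 e he s i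
        nlinarith [hπ0 e he s]
      rw [← hBsum k e he]
      linarith
    linarith
  -- main induction: every M k tends to 0
  have main : ∀ k, Tendsto (M k) L (nhds 0) := by
    intro k
    induction k using Nat.strong_induction_on with
    | _ k ih =>
      match k with
      | 0 =>
        refine squeeze_zero' (g := fun e => α e / δt) ?_ ?_ ?_
        · exact Filter.eventually_of_mem self_mem_nhdsWithin fun e he => hMnn 0 e he
        · refine Filter.eventually_of_mem self_mem_nhdsWithin fun e he => ?_
          rw [le_div_iff₀ hδt]
          have := hM0 e he
          linarith [hM0 e he]
        · simpa using hα.div_const δt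
      | (k+1) =>
        refine squeeze_zero'
          (g := fun e => (α e + ∑ j ∈ Finset.range (k+1), M j e) / δh) ?_ ?_ ?_
        · exact Filter.eventually_of_mem self_mem_nhdsWithin fun e he => hMnn _ e he
        · refine Filter.eventually_of_mem self_mem_nhdsWithin fun e he => ?_
          rw [le_div_iff₀ hδh]
          linarith [hMk k e he]
        · have hsum : Tendsto (fun e => ∑ j ∈ Finset.range (k+1), M j e) L (nhds 0) := by
            have := tendsto_finset_sum (f := fun j e => M j e) (Finset.range (k+1))
              (fun j hj => ih j (Finset.mem_range.mp hj))
            simpa using this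
          simpa using (hα.add hsum).div_const δh
  -- conclusion
  intro s hs
  have hsmem : s ∈ (Finset.range (K + 1)).biUnion part := by
    rw [← hcover]; exact Finset.mem_univ s
  obtain ⟨k, _, hsk⟩ := Finset.mem_biUnion.mp hsmem
  refine squeeze_zero' (g := M k) ?_ ?_ (main k)
  · exact Filter.eventually_of_mem self_mem_nhdsWithin fun e he => hπ0 e he s
  · refine Filter.eventually_of_mem self_mem_nhdsWithin fun e he => ?_
    exact Finset.single_le_sum (fun i _ => hπ0 e he i)
      (Finset.mem_sdiff.mpr ⟨hsk, hs⟩)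
end
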